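/- Let f₀, ω : 𝔻 → ℂ be analytic with |ω(z)| ≤ k on 𝔻 for some k ∈ [0,1], and let f_l be analytic on 𝔻 with f_l(0) = 0 and f_l'(z) = ω(z)·f₀'(z) on 𝔻, where f₀(0) = 0. Then M_r(f_l) ≤ k·M_r(f₀) for all 0 ≤ r ≤ 1/3, where M_r denotes the majorant series. -/

import Mathlib

/-!
Let `c` be the Taylor coefficients of `ω`. Comparing coefficients in
`z f_l'(z) = ω(z) · z f₀'(z)` gives `n a_n = ∑_{i+j=n} c_i · j b_j`, and since `j ≤ n` this yields
`|a_n| ≤ ∑_{i+j=n} |c_i| |b_j|`, hence `M_r(f_l) ≤ M_r(ω) M_r(f₀)`.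

It remains to prove Bohr's inequality `M_r(ω) ≤ k` for `r ≤ 1/3`. As `∑_{n ≥ 1} 3⁻ⁿ = 1/2`, it
follows from `|c_n| ≤ 2 (k - |c_0|)` for `n ≥ 1`. Averaging `ω` over the rotations of the disc by
`n`-th roots of unity gives a function `G` bounded by `k` with `G(0) = c_0` and `G'(0) = c_n`, and
the Schwarz–Pick lemma, applied after a Möbius map of the disc of radius `k`, bounds `k |G'(0)|`
by `k² - |G(0)|² ≤ 2k (k - |G(0)|)`.
-/

open Metric

noncomputable def majorant (a : ℕ → ℂ) (r : ℝ) : ENNReal :=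
  ∑' n, (‖a n‖₊ : ENNReal) * (ENNReal.ofReal r) ^ n

open Finset FormalMultilinearSeries ComplexConjugate

theorem Metric.eball_one {α : Type*} [PseudoMetricSpace α] (x : α) : eball x 1 = ball x 1 := by
  simpa using Metric.eball_coe (x := x) (ε := 1)

section PowerSeries

variable {u v : ℕ → ℂ} {f g : ℂ → ℂ}

theorem hasFPowerSeriesOnBall_ofScalars_of_hasSum
    (h : ∀ z ∈ ball (0 : ℂ) 1, HasSum (fun n => u n * z ^ n) (f z)) :
    HasFPowerSeriesOnBall f (ofScalars ℂ u) 0 1 where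
  r_le := by
    refine ENNReal.le_of_forall_nnreal_lt fun r hr =>
      (ofScalars ℂ u).le_radius_of_tendsto (l := 0) ?_
    have hr' : ((r : ℝ) : ℂ) ∈ ball (0 : ℂ) 1 := by simpa using hr
    simpa [ofScalars_norm] using (h _ hr').summable.tendsto_atTop_zero.norm
  r_pos := one_pos
  hasSum {y} hy := by
    rw [eball_one] at hy
    simpa [ofScalars_apply_eq, mul_comm] using h y hy

theorem summable_norm_mul_pow_of_hasSum
    (h : ∀ z ∈ ball (0 : ℂ) 1, HasSum (fun n => u n * z ^ n) (f z)) {z : ℂ}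
    (hz : z ∈ ball (0 : ℂ) 1) : Summable fun n => ‖u n * z ^ n‖ := by
  have hz' : z ∈ eball (0 : ℂ) 1 := by rwa [eball_one]
  simpa [ofScalars_apply_eq, mul_comm] using (ofScalars ℂ u).summable_norm_apply
    (eball_subset_eball (hasFPowerSeriesOnBall_ofScalars_of_hasSum h).r_le hz')

theorem eq_of_hasSum_mul_pow
    (hu : ∀ z ∈ ball (0 : ℂ) 1, HasSum (fun n => u n * z ^ n) (f z))
    (hv : ∀ z ∈ ball (0 : ℂ) 1, HasSum (fun n => v n * z ^ n) (f z)) : u = v :=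
  ofScalars_series_injective ℂ ℂ <|
    (hasFPowerSeriesOnBall_ofScalars_of_hasSum hu).hasFPowerSeriesAt.eq_formalMultilinearSeries
      (hasFPowerSeriesOnBall_ofScalars_of_hasSum hv).hasFPowerSeriesAt

theorem coeff_zero_eq_of_hasSum {s : ℂ} (h : HasSum (fun n => u n * 0 ^ n) s) : u 0 = s := by
  simpa using (hasSum_single (f := fun n => u n * (0 : ℂ) ^ n) 0 fun n hn => by simp [hn]).unique h

theorem hasSum_natCast_mul_mul_pow_of_hasSum
    (h : ∀ z ∈ ball (0 : ℂ) 1, HasSum (fun n => u n * z ^ n) (f z)) :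
    ∀ z ∈ ball (0 : ℂ) 1, HasSum (fun n => n * u n * z ^ n) (z * deriv f z) := by
  intro z hz
  have hz' : z ∈ eball (0 : ℂ) 1 := by rwa [eball_one]
  have hderiv := (((hasFPowerSeriesOnBall_ofScalars_of_hasSum h).fderiv.hasSum hz').mapL
    (ContinuousLinearMap.apply ℂ ℂ z))
  simp only [zero_add, ContinuousLinearMap.apply_apply, derivSeries_apply_diag,
    ofScalars_apply_eq, smul_eq_mul, nsmul_eq_mul] at hderiv
  rw [← hasSum_nat_add_iff' 1]
  convert hderiv using 1
  · ext n; push_cast; ring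
  · rw [sum_range_one, Nat.cast_zero, zero_mul, zero_mul, sub_zero,
      ← fderiv_apply_one_eq_deriv, ← smul_eq_mul, ← map_smul, smul_eq_mul, mul_one]

theorem hasSum_sum_antidiagonal_mul_pow_of_hasSum
    (hu : ∀ z ∈ ball (0 : ℂ) 1, HasSum (fun n => u n * z ^ n) (f z))
    (hv : ∀ z ∈ ball (0 : ℂ) 1, HasSum (fun n => v n * z ^ n) (g z)) {z : ℂ}
    (hz : z ∈ ball (0 : ℂ) 1) :
    HasSum (fun n => (∑ p ∈ antidiagonal n, u p.1 * v p.2) * z ^ n) (f z * g z) := by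
  have hu' := summable_norm_mul_pow_of_hasSum hu hz
  have hv' := summable_norm_mul_pow_of_hasSum hv hz
  have hprod := (summable_norm_sum_mul_antidiagonal_of_summable_norm hu' hv').of_norm.hasSum
  rw [← tsum_mul_tsum_eq_tsum_sum_antidiagonal_of_summable_norm hu' hv', (hu z hz).tsum_eq,
    (hv z hz).tsum_eq] at hprod
  have hterm : ∀ n, (∑ p ∈ antidiagonal n, u p.1 * v p.2) * z ^ n =
      ∑ p ∈ antidiagonal n, u p.1 * z ^ p.1 * (v p.2 * z ^ p.2) := fun n => by
    rw [sum_mul]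
    refine sum_congr rfl fun p hp => ?_
    rw [← mem_antidiagonal.mp hp, pow_add]
    ring
  simp_rw [hterm]
  exact hprod

end PowerSeries

theorem norm_mul_sub_le_norm_sq_sub_conj_mul {k : ℝ} {β ζ : ℂ} (hβ : ‖β‖ ≤ k) (hζ : ‖ζ‖ ≤ k) :
    k * ‖ζ - β‖ ≤ ‖(k : ℂ) ^ 2 - conj β * ζ‖ := by
  have key : Complex.normSq ((k : ℂ) ^ 2 - conj β * ζ) - k ^ 2 * Complex.normSq (ζ - β)
      = (k ^ 2 - Complex.normSq β) * (k ^ 2 - Complex.normSq ζ) := by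
    simp only [Complex.normSq_apply, sq, Complex.sub_re, Complex.sub_im, Complex.mul_re,
      Complex.mul_im, Complex.ofReal_re, Complex.ofReal_im, Complex.conj_re, Complex.conj_im]
    ring
  rw [← Complex.sq_norm, ← Complex.sq_norm, ← Complex.sq_norm, ← Complex.sq_norm] at key
  have hprod : 0 ≤ (k ^ 2 - ‖β‖ ^ 2) * (k ^ 2 - ‖ζ‖ ^ 2) := by
    apply mul_nonneg <;> nlinarith [norm_nonneg β, norm_nonneg ζ]
  nlinarith [norm_nonneg ((k : ℂ) ^ 2 - conj β * ζ), norm_nonneg (ζ - β)]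

theorem mul_norm_deriv_le_sq_sub_sq {G : ℂ → ℂ} {k : ℝ} (hG : DifferentiableOn ℂ G (ball 0 1))
    (hGk : Set.MapsTo G (ball 0 1) (closedBall 0 k)) (h0 : ‖G 0‖ < k) :
    k * ‖deriv G 0‖ ≤ k ^ 2 - ‖G 0‖ ^ 2 := by
  set β := G 0 with hβ
  have hk : 0 < k := (norm_nonneg β).trans_lt h0
  have hGk' : ∀ w ∈ ball (0 : ℂ) 1, ‖G w‖ ≤ k := fun w hw => mem_closedBall_zero_iff.mp (hGk hw)
  have hden : ∀ w ∈ ball (0 : ℂ) 1, (k : ℂ) ^ 2 - conj β * G w ≠ 0 := by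
    intro w hw hzero
    have : ‖conj β * G w‖ < k ^ 2 := by
      rw [norm_mul, Complex.norm_conj, sq]
      exact mul_lt_mul_of_lt_of_le_of_nonneg_of_pos h0 (hGk' w hw) (norm_nonneg _) hk
    rw [← sub_eq_zero.mp hzero, norm_pow, Complex.norm_real, Real.norm_of_nonneg hk.le] at this
    exact this.false
  -- the Möbius automorphism of the disc of radius `k` sending `β` to `0`
  set φ : ℂ → ℂ := fun w => k * (G w - β) / ((k : ℂ) ^ 2 - conj β * G w)
  have hφ : DifferentiableOn ℂ φ (ball 0 1) :=
    ((hG.sub_const β).const_mul _).div ((hG.const_mul _).const_sub _) hden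
  have hφ1 : Set.MapsTo φ (ball 0 1) (closedBall (φ 0) 1) := by
    intro w hw
    rw [mem_closedBall, show φ 0 = 0 by simp [φ, ← hβ], dist_zero_right, norm_div, norm_mul,
      Complex.norm_real, Real.norm_of_nonneg hk.le]
    exact div_le_one_of_le₀ (norm_mul_sub_le_norm_sq_sub_conj_mul h0.le (hGk' w hw)) (norm_nonneg _)
  have hG' : HasDerivAt G (deriv G 0) 0 :=
    (hG.differentiableAt (ball_mem_nhds 0 one_pos)).hasDerivAt
  have hpos : 0 < k ^ 2 - ‖β‖ ^ 2 := by nlinarith [norm_nonneg β]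
  have hden0 : (k : ℂ) ^ 2 - conj β * β = (k ^ 2 - ‖β‖ ^ 2 : ℝ) := by
    rw [Complex.conj_mul']; push_cast; ring
  have hφ' : HasDerivAt φ (k * deriv G 0 / (k ^ 2 - ‖β‖ ^ 2 : ℝ)) 0 := by
    refine (((hG'.sub_const β).const_mul (k : ℂ)).div ((hG'.const_mul (conj β)).const_sub _)
      (hden 0 (mem_ball_self one_pos))).congr_deriv ?_
    have hne : ((k ^ 2 - ‖β‖ ^ 2 : ℝ) : ℂ) ≠ 0 := by exact_mod_cast hpos.ne'
    rw [← hβ, hden0, sub_self, mul_zero, zero_mul, sub_zero]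
    field_simp
  have := Complex.norm_deriv_le_one_of_mapsTo_ball hφ hφ1 one_pos
  rwa [hφ'.deriv, norm_div, norm_mul, Complex.norm_real, Complex.norm_real,
    Real.norm_of_nonneg hk.le, Real.norm_of_nonneg hpos.le, div_le_one hpos] at this

theorem norm_deriv_le_two_mul_sub {G : ℂ → ℂ} {k : ℝ} (hG : DifferentiableOn ℂ G (ball 0 1))
    (hGk : Set.MapsTo G (ball 0 1) (closedBall 0 k)) :
    ‖deriv G 0‖ ≤ 2 * (k - ‖G 0‖) := by
  have hG0 : ‖G 0‖ ≤ k := mem_closedBall_zero_iff.mp (hGk (mem_ball_self one_pos))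
  suffices ‖deriv G 0‖ / 2 + ‖G 0‖ ≤ k by linarith
  -- enlarging the target disc makes `‖G 0‖ < k'`, as the Möbius map in the strict bound requires
  refine le_of_forall_gt_imp_ge_of_dense fun k' hk' => ?_
  have h := mul_norm_deriv_le_sq_sub_sq hG (hGk.mono_right (closedBall_subset_closedBall hk'.le))
    (hG0.trans_lt hk')
  have hk'0 : 0 < k' := (norm_nonneg _).trans_lt (hG0.trans_lt hk')
  nlinarith [norm_nonneg (G 0)]

theorem norm_coeff_one_le_two_mul_sub {γ : ℕ → ℂ} {G : ℂ → ℂ} {k : ℝ}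
    (hγ : ∀ z ∈ ball (0 : ℂ) 1, HasSum (fun m => γ m * z ^ m) (G z))
    (hGk : ∀ z ∈ ball (0 : ℂ) 1, ‖G z‖ ≤ k) : ‖γ 1‖ ≤ 2 * (k - ‖γ 0‖) := by
  have hp := hasFPowerSeriesOnBall_ofScalars_of_hasSum hγ
  have hd : DifferentiableOn ℂ G (ball 0 1) := eball_one (0 : ℂ) ▸ hp.differentiableOn
  have h := norm_deriv_le_two_mul_sub hd fun z hz => mem_closedBall_zero_iff.mpr (hGk z hz)
  rw [hp.hasFPowerSeriesAt.deriv, ← coeff_zero_eq_of_hasSum (hγ 0 (mem_ball_self one_pos))] at h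
  simpa [ofScalars_apply_eq] using h

theorem IsPrimitiveRoot.sum_pow_pow_eq_ite {K : Type*} [Field K] {ζ : K} {n : ℕ}
    (hζ : IsPrimitiveRoot ζ n) (m : ℕ) :
    ∑ j ∈ range n, (ζ ^ m) ^ j = if n ∣ m then (n : K) else 0 := by
  split_ifs with hdvd
  · simp [(hζ.pow_eq_one_iff_dvd m).mpr hdvd]
  · rw [geom_sum_eq (mt (hζ.pow_eq_one_iff_dvd m).mp hdvd), ← pow_mul, mul_comm, pow_mul,
      hζ.pow_eq_one, one_pow, sub_self, zero_div]

theorem hasSum_coeff_mul_mul_pow_of_isPrimitiveRoot {c : ℕ → ℂ} {ω : ℂ → ℂ}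
    (hc : ∀ z ∈ ball (0 : ℂ) 1, HasSum (fun m => c m * z ^ m) (ω z)) {n : ℕ} (hn : n ≠ 0)
    {ζ : ℂ} (hζ : IsPrimitiveRoot ζ n) {v : ℂ} (hv : v ∈ ball (0 : ℂ) 1) :
    HasSum (fun m => c (n * m) * (v ^ n) ^ m) ((n : ℂ)⁻¹ * ∑ j ∈ range n, ω (ζ ^ j * v)) := by
  have hmem : ∀ j : ℕ, ζ ^ j * v ∈ ball (0 : ℂ) 1 := fun j => by
    simpa [norm_mul, norm_pow, hζ.norm'_eq_one hn] using hv
  have hsum := hasSum_sum fun j (_ : j ∈ range n) => hc _ (hmem j)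
  have hterm : ∀ m, ∑ j ∈ range n, c m * (ζ ^ j * v) ^ m =
      if n ∣ m then n * (c m * v ^ m) else 0 := fun m => by
    simp_rw [mul_pow, ← pow_mul, mul_comm _ m, pow_mul, ← mul_assoc, mul_comm (c m), mul_assoc,
      ← sum_mul, hζ.sum_pow_pow_eq_ite]
    split_ifs <;> ring
  simp_rw [hterm] at hsum
  rw [← (mul_right_injective₀ hn).hasSum_iff fun m hm => if_neg fun ⟨l, hl⟩ => hm ⟨l, hl.symm⟩]
    at hsum
  simpa [Function.comp_def, ← pow_mul, hn] using hsum.mul_left (n : ℂ)⁻¹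

theorem norm_coeff_le_two_mul_sub {c : ℕ → ℂ} {ω : ℂ → ℂ} {k : ℝ}
    (hc : ∀ z ∈ ball (0 : ℂ) 1, HasSum (fun m => c m * z ^ m) (ω z))
    (hω : ∀ z ∈ ball (0 : ℂ) 1, ‖ω z‖ ≤ k) {n : ℕ} (hn : n ≠ 0) :
    ‖c n‖ ≤ 2 * (k - ‖c 0‖) := by
  obtain ⟨ζ, hζ⟩ : ∃ ζ : ℂ, IsPrimitiveRoot ζ n := ⟨_, Complex.isPrimitiveRoot_exp n hn⟩
  have hroot : ∀ w ∈ ball (0 : ℂ) 1, w ^ (n⁻¹ : ℂ) ∈ ball (0 : ℂ) 1 := fun w hw => by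
    rw [mem_ball_zero_iff, ← pow_lt_one_iff_of_nonneg (norm_nonneg _) hn, ← norm_pow,
      Complex.cpow_nat_inv_pow w hn]
    exact mem_ball_zero_iff.mp hw
  -- `G (w ^ n)` is the average of `ω` over the `n` rotations of `w`
  set G : ℂ → ℂ := fun w => (n : ℂ)⁻¹ * ∑ j ∈ range n, ω (ζ ^ j * w ^ (n⁻¹ : ℂ))
  have hG : ∀ w ∈ ball (0 : ℂ) 1, HasSum (fun m => c (n * m) * w ^ m) (G w) := fun w hw => by
    simpa only [Complex.cpow_nat_inv_pow w hn] using
      hasSum_coeff_mul_mul_pow_of_isPrimitiveRoot hc hn hζ (hroot w hw)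
  have hGk : ∀ w ∈ ball (0 : ℂ) 1, ‖G w‖ ≤ k := fun w hw => by
    have hj : ∀ j ∈ range n, ‖ω (ζ ^ j * w ^ (n⁻¹ : ℂ))‖ ≤ k := fun j _ => hω _ (by
      simpa [norm_mul, norm_pow, hζ.norm'_eq_one hn] using hroot w hw)
    have hn' : (0 : ℝ) < n := Nat.cast_pos.mpr (Nat.pos_of_ne_zero hn)
    calc ‖G w‖ ≤ (n : ℝ)⁻¹ * ∑ j ∈ range n, k := by
          rw [norm_mul, norm_inv, Complex.norm_natCast]
          gcongr
          exact (norm_sum_le _ _).trans (sum_le_sum hj)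
      _ = k := by rw [sum_const, card_range, nsmul_eq_mul, inv_mul_cancel_left₀ hn'.ne']
  simpa using norm_coeff_one_le_two_mul_sub hG hGk

theorem ENNReal.tsum_mul_tsum_eq_tsum_sum_antidiagonal {A : Type*} [AddCommMonoid A]
    [HasAntidiagonal A] (f g : A → ENNReal) :
    (∑' n, f n) * ∑' n, g n = ∑' n, ∑ p ∈ antidiagonal n, f p.1 * g p.2 := by
  simp_rw [← ENNReal.tsum_mul_right, ← ENNReal.tsum_mul_left]
  rw [← ENNReal.tsum_prod, ← HasAntidiagonal.sigmaAntidiagonalEquivProd.tsum_eq,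
    ENNReal.tsum_sigma']
  refine tsum_congr fun n => ?_
  rw [tsum_fintype]
  exact sum_finset_coe (fun p : A × A => f p.1 * g p.2) _

theorem majorant_mono (a : ℕ → ℂ) : Monotone (majorant a) := fun r s hrs =>
  ENNReal.tsum_le_tsum fun n => by gcongr

theorem majorant_le_mul_of_norm_le_sum_antidiagonal {a b c : ℕ → ℂ}
    (h : ∀ n, ‖a n‖ ≤ ∑ p ∈ antidiagonal n, ‖b p.1‖ * ‖c p.2‖) (r : ℝ) :
    majorant a r ≤ majorant b r * majorant c r := by
  unfold majorant
  rw [ENNReal.tsum_mul_tsum_eq_tsum_sum_antidiagonal]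
  refine ENNReal.tsum_le_tsum fun n => ?_
  have hn : ‖a n‖₊ ≤ ∑ p ∈ antidiagonal n, ‖b p.1‖₊ * ‖c p.2‖₊ := by
    rw [← NNReal.coe_le_coe]; push_cast; exact h n
  calc (‖a n‖₊ : ENNReal) * ENNReal.ofReal r ^ n
      ≤ (∑ p ∈ antidiagonal n, (‖b p.1‖₊ * ‖c p.2‖₊ : ENNReal)) * ENNReal.ofReal r ^ n := by
        gcongr; exact_mod_cast hn
    _ = _ := by
        rw [sum_mul]
        refine sum_congr rfl fun p hp => ?_
        rw [← mem_antidiagonal.mp hp, pow_add]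
        ring

theorem norm_le_sum_antidiagonal_of_natCast_mul_eq {a b c : ℕ → ℂ} (ha : a 0 = 0)
    (h : ∀ n : ℕ, (n : ℂ) * a n = ∑ p ∈ antidiagonal n, b p.1 * (p.2 * c p.2)) (n : ℕ) :
    ‖a n‖ ≤ ∑ p ∈ antidiagonal n, ‖b p.1‖ * ‖c p.2‖ := by
  rcases Nat.eq_zero_or_pos n with rfl | hn
  · simp [ha]; positivity
  refine le_of_mul_le_mul_left ?_ (Nat.cast_pos.mpr hn : (0 : ℝ) < n)
  calc (n : ℝ) * ‖a n‖ = ‖∑ p ∈ antidiagonal n, b p.1 * (p.2 * c p.2)‖ := by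
        rw [← h, norm_mul, Complex.norm_natCast]
    _ ≤ ∑ p ∈ antidiagonal n, p.2 * (‖b p.1‖ * ‖c p.2‖) := by
        refine (norm_sum_le _ _).trans_eq (sum_congr rfl fun p _ => ?_)
        rw [norm_mul, norm_mul, Complex.norm_natCast]; ring
    _ ≤ ∑ p ∈ antidiagonal n, n * (‖b p.1‖ * ‖c p.2‖) := by
        gcongr with p hp
        exact_mod_cast (mem_antidiagonal.mp hp ▸ Nat.le_add_left p.2 p.1)
    _ = n * ∑ p ∈ antidiagonal n, ‖b p.1‖ * ‖c p.2‖ := (mul_sum ..).symm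

theorem majorant_one_third_le {c : ℕ → ℂ} {k : ℝ}
    (h : ∀ n ≠ 0, ‖c n‖ ≤ 2 * (k - ‖c 0‖)) : majorant c (1 / 3) ≤ ENNReal.ofReal k := by
  have hk : ‖c 0‖ ≤ k := by linarith [h 1 one_ne_zero, norm_nonneg (c 1)]
  have hgeom : HasSum (fun n : ℕ => 2 * (k - ‖c 0‖) / 3 * (1 / 3) ^ n) (k - ‖c 0‖) := by
    have := (hasSum_geometric_of_lt_one (by norm_num) (by norm_num : (1 / 3 : ℝ) < 1)).mul_left
      (2 * (k - ‖c 0‖) / 3)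
    rwa [show 2 * (k - ‖c 0‖) / 3 * (1 - 1 / 3)⁻¹ = k - ‖c 0‖ by ring] at this
  have htail : ∑' n, (‖c (n + 1)‖₊ : ENNReal) * ENNReal.ofReal (1 / 3) ^ (n + 1)
      ≤ ENNReal.ofReal (k - ‖c 0‖) := by
    rw [← hgeom.tsum_eq, ENNReal.ofReal_tsum_of_nonneg
      (fun n => mul_nonneg (by linarith) (by positivity)) hgeom.summable]
    refine ENNReal.tsum_le_tsum fun n => ?_
    rw [← ENNReal.ofReal_pow (by norm_num), ← enorm_eq_nnnorm, ← ofReal_norm,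
      ← ENNReal.ofReal_mul (norm_nonneg _)]
    refine ENNReal.ofReal_le_ofReal ?_
    calc ‖c (n + 1)‖ * (1 / 3) ^ (n + 1) ≤ 2 * (k - ‖c 0‖) * (1 / 3) ^ (n + 1) := by
          gcongr; exact h _ n.succ_ne_zero
      _ = 2 * (k - ‖c 0‖) / 3 * (1 / 3) ^ n := by ring
  calc majorant c (1 / 3)
      = ‖c 0‖ₑ + ∑' n, (‖c (n + 1)‖₊ : ENNReal) * ENNReal.ofReal (1 / 3) ^ (n + 1) := by
        rw [majorant, tsum_eq_zero_add' ENNReal.summable, pow_zero, mul_one, enorm_eq_nnnorm]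
    _ ≤ ENNReal.ofReal ‖c 0‖ + ENNReal.ofReal (k - ‖c 0‖) := by
        rw [ofReal_norm]; gcongr
    _ = ENNReal.ofReal k := by
        rw [← ENNReal.ofReal_add (norm_nonneg _) (sub_nonneg.mpr hk), add_sub_cancel]

theorem majorant_le_of_hasSum {c : ℕ → ℂ} {ω : ℂ → ℂ} {k : ℝ}
    (hc : ∀ z ∈ ball (0 : ℂ) 1, HasSum (fun m => c m * z ^ m) (ω z))
    (hω : ∀ z ∈ ball (0 : ℂ) 1, ‖ω z‖ ≤ k) {r : ℝ} (hr : r ≤ 1 / 3) :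
    majorant c r ≤ ENNReal.ofReal k :=
  (majorant_mono c hr).trans (majorant_one_third_le fun _ hn => norm_coeff_le_two_mul_sub hc hω hn)

theorem natCast_mul_coeff_eq_sum_antidiagonal {a b c : ℕ → ℂ} {f g ω : ℂ → ℂ}
    (ha : ∀ z ∈ ball (0 : ℂ) 1, HasSum (fun n => a n * z ^ n) (f z))
    (hb : ∀ z ∈ ball (0 : ℂ) 1, HasSum (fun n => b n * z ^ n) (g z))
    (hc : ∀ z ∈ ball (0 : ℂ) 1, HasSum (fun n => c n * z ^ n) (ω z))
    (hder : ∀ z ∈ ball (0 : ℂ) 1, deriv f z = ω z * deriv g z) (n : ℕ) :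
    (n : ℂ) * a n = ∑ p ∈ antidiagonal n, c p.1 * (p.2 * b p.2) := by
  have hprod : ∀ z ∈ ball (0 : ℂ) 1, HasSum
      (fun n => (∑ p ∈ antidiagonal n, c p.1 * (p.2 * b p.2)) * z ^ n) (z * deriv f z) := by
    intro z hz
    rw [hder z hz, mul_left_comm]
    exact hasSum_sum_antidiagonal_mul_pow_of_hasSum hc (hasSum_natCast_mul_mul_pow_of_hasSum hb) hz
  exact congrFun (eq_of_hasSum_mul_pow (hasSum_natCast_mul_mul_pow_of_hasSum ha) hprod) n

theorem majorant_deriv_factor_bound_general (k : ℝ)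
    (f0 fl ω : ℂ → ℂ) (a b : ℕ → ℂ)
    (hω : DifferentiableOn ℂ ω (ball 0 1))
    (hωb : ∀ z ∈ ball (0:ℂ) 1, ‖ω z‖ ≤ k)
    (hb : ∀ z ∈ ball (0:ℂ) 1, HasSum (fun n => b n * z ^ n) (f0 z))
    (ha : ∀ z ∈ ball (0:ℂ) 1, HasSum (fun n => a n * z ^ n) (fl z))
    (hfl0 : fl 0 = 0)
    (hder : ∀ z ∈ ball (0:ℂ) 1, deriv fl z = ω z * deriv f0 z) :
    ∀ r : ℝ, 0 ≤ r → r ≤ 1/3 →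
      majorant a r ≤ ENNReal.ofReal k * majorant b r := by
  intro r _ hr
  obtain ⟨c, hc⟩ : ∃ c : ℕ → ℂ, ∀ z ∈ ball (0 : ℂ) 1, HasSum (fun n => c n * z ^ n) (ω z) :=
    ⟨fun n => (n.factorial : ℂ)⁻¹ * iteratedDeriv n ω 0, fun z hz => by
      simpa [mul_comm, mul_left_comm] using Complex.hasSum_taylorSeries_on_ball hω hz⟩
  have ha0 : a 0 = 0 := hfl0 ▸ coeff_zero_eq_of_hasSum (ha 0 (mem_ball_self one_pos))
  calc majorant a r ≤ majorant c r * majorant b r :=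
        majorant_le_mul_of_norm_le_sum_antidiagonal (norm_le_sum_antidiagonal_of_natCast_mul_eq ha0
          (natCast_mul_coeff_eq_sum_antidiagonal ha hb hc hder)) r
    _ ≤ ENNReal.ofReal k * majorant b r := by
        gcongr
        exact majorant_le_of_hasSum hc hωb hr

theorem majorant_deriv_factor_bound (k : ℝ) (hk : k ∈ Set.Icc (0:ℝ) 1)
    (f0 fl ω : ℂ → ℂ) (a b : ℕ → ℂ)
    (hω : DifferentiableOn ℂ ω (ball 0 1))
    (hωb : ∀ z ∈ ball (0:ℂ) 1, ‖ω z‖ ≤ k)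
    (hb : ∀ z ∈ ball (0:ℂ) 1, HasSum (fun n => b n * z ^ n) (f0 z))
    (ha : ∀ z ∈ ball (0:ℂ) 1, HasSum (fun n => a n * z ^ n) (fl z))
    (hf00 : f0 0 = 0) (hfl0 : fl 0 = 0)
    (hder : ∀ z ∈ ball (0:ℂ) 1, deriv fl z = ω z * deriv f0 z) :
    ∀ r : ℝ, 0 ≤ r → r ≤ 1/3 →
      majorant a r ≤ ENNReal.ofReal k * majorant b r :=
  majorant_deriv_factor_bound_general k f0 fl ω a b hω hωb hb ha hfl0 hder
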